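/- Let (Ω, P) be a probability space, Λ > 0, N : Ω → ℕ a Poisson random variable with mean Λ, and (T_i)_{i∈ℕ} a sequence of real-valued random variables, each with common law μ (a Borel probability measure on ℝ), such that the family (N, T_0, T_1, …) is mutually independent. For real numbers t₁ ≤ t₂ define the counting variable N_{[t₁,t₂]}(ω) = #{ i < N(ω) : T_i(ω) ∈ [t₁,t₂] }. Then for every z ∈ [0,1], the generating function satisfies E[ z^{N_{[t₁,t₂]}} ] = exp( Λ (z − 1) μ([t₁,t₂]) ). -/

import Mathlib

/-!
On the event `{N = n}` the count is a sum of `n` independent indicators of `T_i ∈ [t₁, t₂]`,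
so `z ^ count` is a product of `n` independent factors, each of mean `q = 1 + (z - 1) p` with
`p = μ [t₁, t₂]`. Independence of `N` from the `T_i` therefore gives
`E[z ^ count] = ∑ₙ P(N = n) qⁿ`, and for Poisson `N` this series sums to `exp (Λ (q - 1))`.
-/

open MeasureTheory ProbabilityTheory

theorem hasSum_poisson_pgf (Λ m : ℝ) :
    HasSum (fun n : ℕ => Λ ^ n * Real.exp (-Λ) / n.factorial * m ^ n)
      (Real.exp (Λ * (m - 1))) := by
  have hexp := (NormedSpace.expSeries_div_hasSum_exp (Λ * m)).mul_left (Real.exp (-Λ))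
  rw [← Real.exp_eq_exp_ℝ, ← Real.exp_add] at hexp
  have hterm (n : ℕ) : Λ ^ n * Real.exp (-Λ) / n.factorial * m ^ n
      = Real.exp (-Λ) * ((Λ * m) ^ n / n.factorial) := by
    rw [mul_pow]; ring
  simpa only [hterm, show Λ * (m - 1) = -Λ + Λ * m by ring] using hexp

section

variable {Ω : Type*} [MeasurableSpace Ω] {P : Measure Ω}

theorem hasSum_setIntegral_preimage_singleton {α : Type*} [MeasurableSpace α] [Countable α]
    [MeasurableSingletonClass α] {N : Ω → α} (hN : Measurable N) {F : Ω → ℝ}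
    (hF : Integrable F P) :
    HasSum (fun a => ∫ ω in N ⁻¹' {a}, F ω ∂P) (∫ ω, F ω ∂P) := by
  have hcover : (⋃ a, N ⁻¹' {a}) = Set.univ := by
    rw [← Set.preimage_iUnion, Set.iUnion_of_singleton, Set.preimage_univ]
  simpa [hcover] using hasSum_integral_iUnion (fun a => hN (measurableSet_singleton a))
    (pairwise_disjoint_fiber N) (hcover ▸ hF.integrableOn)

theorem integral_ite_mem_of_map_eq {α : Type*} [MeasurableSpace α] {T : Ω → α}
    (hT : Measurable T) {μ : Measure α} [IsProbabilityMeasure μ] (hlaw : P.map T = μ)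
    {s : Set α} [DecidablePred (· ∈ s)] (hs : MeasurableSet s) (z : ℝ) :
    ∫ ω, (if T ω ∈ s then z else 1) ∂P = 1 + (z - 1) * μ.real s := by
  have hite : (fun x => if x ∈ s then z else (1 : ℝ))
      = fun x => s.indicator (fun _ => z - 1) x + 1 := by
    funext x; by_cases hx : x ∈ s <;> simp [hx]
  have hmeas : Measurable fun x => if x ∈ s then z else (1 : ℝ) :=
    Measurable.ite hs measurable_const measurable_const
  rw [← integral_map hT.aemeasurable hmeas.aestronglyMeasurable, hlaw, hite,
    integral_add ((integrable_const _).indicator hs) (integrable_const 1),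
    integral_indicator_const _ hs]
  simp only [integral_const, probReal_univ, smul_eq_mul]
  ring

theorem setIntegral_preimage_singleton_prod_range {N : Ω → ℕ} {X : ℕ → Ω → ℝ}
    (hN : Measurable N) (hX : ∀ i, Measurable (X i))
    (hindep : iIndepFun (fun o : Option ℕ => o.elim (fun ω => (N ω : ℝ)) X) P) (n : ℕ) :
    ∫ ω in N ⁻¹' {n}, ∏ i ∈ Finset.range (N ω), X i ω ∂P
      = P.real (N ⁻¹' {n}) * ∏ i ∈ Finset.range n, ∫ ω, X i ω ∂P := by
  have hfiber : MeasurableSet (N ⁻¹' {n}) := hN (measurableSet_singleton n)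
  have hmeas : ∀ o : Option ℕ, Measurable (o.elim (fun ω => (N ω : ℝ)) X) := by
    rintro (_ | i)
    · exact measurable_from_nat.comp hN
    · exact hX i
  -- Keep the coordinates `N, X 0, …, X (n - 1)` and replace `N` by the indicator of `{N = n}`.
  let φ : Option (Fin n) → ℝ → ℝ :=
    fun o => o.elim (({(n : ℝ)} : Set ℝ).indicator 1) fun _ => id
  have hφ : ∀ o, Measurable (φ o) := by
    rintro (_ | i)
    · exact measurable_one.indicator (measurableSet_singleton _)
    · exact measurable_id
  have hprod := (hindep.precomp (Option.map_injective Fin.val_injective)).integral_fun_prod_comp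
    (f := φ) (fun o => (hmeas _).aemeasurable) fun o => (hφ o).aestronglyMeasurable
  simp only [Fintype.prod_option, φ, Option.elim, Option.map, id] at hprod
  have hrestrict (ω : Ω) : ({(n : ℝ)} : Set ℝ).indicator 1 (N ω : ℝ) * ∏ i : Fin n, X i ω
      = (N ⁻¹' {n}).indicator (fun ω => ∏ i ∈ Finset.range (N ω), X i ω) ω := by
    by_cases h : N ω = n
    · simp [h, Fin.prod_univ_eq_prod_range (fun i => X i ω)]
    · simp [h]
  have hmass : ∫ ω, ({(n : ℝ)} : Set ℝ).indicator 1 (N ω : ℝ) ∂P = P.real (N ⁻¹' {n}) := by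
    rw [← integral_indicator_one hfiber]
    congr 1 with ω
    by_cases h : N ω = n <;> simp [h]
  simpa only [hrestrict, integral_indicator hfiber, hmass,
    Fin.prod_univ_eq_prod_range (fun i => ∫ ω, X i ω ∂P)] using hprod

theorem hasSum_integral_prod_range [IsFiniteMeasure P] {N : Ω → ℕ} {X : ℕ → Ω → ℝ}
    (hN : Measurable N) (hX : ∀ i, Measurable (X i)) (hbound : ∀ i ω, |X i ω| ≤ 1)
    (hindep : iIndepFun (fun o : Option ℕ => o.elim (fun ω => (N ω : ℝ)) X) P) :
    HasSum (fun n => P.real (N ⁻¹' {n}) * ∏ i ∈ Finset.range n, ∫ ω, X i ω ∂P)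
      (∫ ω, ∏ i ∈ Finset.range (N ω), X i ω ∂P) := by
  have hmeas : Measurable fun ω => ∏ i ∈ Finset.range (N ω), X i ω :=
    (measurable_from_prod_countable_right
      (f := fun p : ℕ × Ω => ∏ i ∈ Finset.range p.1, X i p.2)
      fun n => Finset.measurable_prod (Finset.range n) fun i _ => hX i).comp
      (hN.prodMk measurable_id)
  have hint : Integrable (fun ω => ∏ i ∈ Finset.range (N ω), X i ω) P := by
    refine (integrable_const (1 : ℝ)).mono' hmeas.aestronglyMeasurable (ae_of_all _ fun ω => ?_)
    rw [Real.norm_eq_abs, Finset.abs_prod]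
    exact Finset.prod_le_one (fun i _ => abs_nonneg _) fun i _ => hbound i ω
  simpa only [setIntegral_preimage_singleton_prod_range hN hX hindep] using
    hasSum_setIntegral_preimage_singleton hN hint

end

theorem poisson_thinning_pgf
    {Ω : Type*} [MeasurableSpace Ω] (P : Measure Ω) [IsProbabilityMeasure P]
    (Λ : ℝ) (hΛ : 0 < Λ)
    (N : Ω → ℕ) (hNmeas : Measurable N)
    (hN : ∀ r : ℕ, P {ω | N ω = r} = ENNReal.ofReal (Λ ^ r * Real.exp (-Λ) / r.factorial))
    (T : ℕ → Ω → ℝ) (hTmeas : ∀ i, Measurable (T i))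
    (μ : Measure ℝ) [IsProbabilityMeasure μ]
    (hlaw : ∀ i, P.map (T i) = μ)
    (hindep : iIndepFun (m := fun _ : Option ℕ => (inferInstance : MeasurableSpace ℝ))
      (fun o : Option ℕ => match o with
        | none => fun ω => (N ω : ℝ)
        | some i => T i) P)
    (t₁ t₂ : ℝ)
    (z : ℝ) (hz : z ∈ Set.Icc (0 : ℝ) 1) :
    ∫ ω, z ^ ((Finset.range (N ω)).filter (fun i => T i ω ∈ Set.Icc t₁ t₂)).card ∂P
      = Real.exp (Λ * (z - 1) * (μ (Set.Icc t₁ t₂)).toReal) := by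
  let g : ℝ → ℝ := fun x => if x ∈ Set.Icc t₁ t₂ then z else 1
  have hg : Measurable g := Measurable.ite measurableSet_Icc measurable_const measurable_const
  have hg_abs (x : ℝ) : |g x| ≤ 1 := by
    obtain ⟨hz0, hz1⟩ := hz
    dsimp only [g]
    split_ifs <;> simp [abs_of_nonneg hz0, hz1]
  have hcount (ω : Ω) :
      z ^ ((Finset.range (N ω)).filter (fun i => T i ω ∈ Set.Icc t₁ t₂)).card
        = ∏ i ∈ Finset.range (N ω), g (T i ω) := by
    rw [Finset.prod_ite, Finset.prod_const, Finset.prod_const_one, mul_one]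
  have hindep_g :
      iIndepFun (fun o : Option ℕ => o.elim (fun ω => (N ω : ℝ)) fun i => g ∘ T i) P := by
    convert hindep.comp (fun o => o.elim id fun _ => g)
      (by rintro (_ | i); exacts [measurable_id, hg]) using 1
    funext o; cases o <;> rfl
  have hweight (n : ℕ) : P.real (N ⁻¹' {n}) = Λ ^ n * Real.exp (-Λ) / n.factorial := by
    rw [measureReal_def, show N ⁻¹' {n} = {ω | N ω = n} from rfl, hN n,
      ENNReal.toReal_ofReal (by positivity)]
  have hmean (i : ℕ) : ∫ ω, g (T i ω) ∂P = 1 + (z - 1) * μ.real (Set.Icc t₁ t₂) :=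
    integral_ite_mem_of_map_eq (hTmeas i) (hlaw i) measurableSet_Icc z
  simp_rw [hcount]
  refine (hasSum_integral_prod_range hNmeas (fun i => hg.comp (hTmeas i))
    (fun i ω => hg_abs _) hindep_g).unique ?_
  simpa [hweight, hmean, measureReal_def, mul_assoc] using
    hasSum_poisson_pgf Λ (1 + (z - 1) * μ.real (Set.Icc t₁ t₂))
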